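/- Algorithm 3 (sequential allocation by proportional cut-points) always outputs an allocation of [0,1] into n consecutive intervals, one per agent, such that each agent's interval is worth at least 1/n of that agent's reported total value; moreover the allocation is entire (the intervals cover [0,1]). -/

import Mathlib

open MeasureTheory Set intervalIntegral

/-- The value of set `X` under value density function `f`. -/
noncomputable def val (f : ℝ → ℝ) (X : Set ℝ) : ℝ := ∫ t in X, f t

/-- `f` is piecewise constant on `[0,1]`. -/
def PWC (f : ℝ → ℝ) : Prop :=
  ∃ m : ℕ, ∃ t : ℕ → ℝ, t 0 = 0 ∧ t m = 1 ∧ (∀ j < m, t j < t (j + 1)) ∧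
    ∀ j < m, ∀ x ∈ Set.Ico (t j) (t (j + 1)), f x = f (t j)

/-! Agent `σ j`, still unallocated in round `j - 1`, has its `j`-th cut point at or beyond the
cut `c j` chosen in that round, while its `(j + 1)`-th cut point is the next cut `c (j + 1)`
(or `1` in the last round). So its piece `[c j, c (j + 1))` contains the interval between two
consecutive proportional cut points of its own, which it values at exactly `1/n` of the whole.
The pieces are consecutive because the cuts increase, hence they tile `[0, 1]`. -/

theorem PWC.integrableOn {f : ℝ → ℝ} (hf : PWC f) : IntegrableOn f (Icc 0 1) := by
  obtain ⟨m, t, ht0, htm, -, hconst⟩ := hf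
  have piece : ∀ j < m, IntegrableOn f (Ico (t j) (t (j + 1))) := fun j hj =>
    (integrableOn_const measure_Ico_lt_top.ne).congr_fun
      (fun y hy => (hconst j hj y hy).symm) measurableSet_Ico
  have initial : ∀ k ≤ m, IntegrableOn f (Ico (t 0) (t k)) := by
    intro k hk
    induction k with
    | zero => simp
    | succ k ih =>
      exact ((ih (by omega)).union (piece k (by omega))).mono_set Ico_subset_Ico_union_Ico
  rw [integrableOn_Icc_iff_integrableOn_Ico, ← ht0, ← htm]
  exact initial m le_rfl

lemma val_Ico (g : ℝ → ℝ) {a b : ℝ} (hab : a ≤ b) :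
    val g (Ico a b) = ∫ t in a..b, g t := by
  rw [val, integral_Ico_eq_integral_Ioo, integral_of_le hab, integral_Ioc_eq_integral_Ioo]

lemma val_Icc (g : ℝ → ℝ) {a b : ℝ} (hab : a ≤ b) :
    val g (Icc a b) = ∫ t in a..b, g t := by
  rw [val, integral_Icc_eq_integral_Ioc, integral_of_le hab]

lemma integral_le_integral_of_subinterval {g : ℝ → ℝ} {a b p q : ℝ}
    (hg : IntegrableOn g (Icc a b)) (hg0 : ∀ t ∈ Icc a b, 0 ≤ g t)
    (hap : a ≤ p) (hpq : p ≤ q) (hqb : q ≤ b) :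
    ∫ t in p..q, g t ≤ ∫ t in a..b, g t := by
  have hab : a ≤ b := (hap.trans hpq).trans hqb
  refine integral_mono_interval hap hpq hqb ?_
    ((intervalIntegrable_iff_integrableOn_Icc_of_le hab).2 hg)
  exact (ae_restrict_iff' measurableSet_Ioc).2
    (.of_forall fun t ht => hg0 t (Ioc_subset_Icc_self ht))

lemma monotoneOn_Iic_of_lt_add_one {α : Type*} [Preorder α] {y : ℕ → α} {n : ℕ}
    (hy : ∀ j < n, y j < y (j + 1)) : MonotoneOn y (Iic n) :=
  monotoneOn_of_le_add_one ordConnected_Iic fun j _ _ hj => (hy j (by simpa using hj)).le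

lemma biUnion_range_Ico_eq_Ico {α : Type*} [LinearOrder α] {c : ℕ → α} {k : ℕ}
    (hc : MonotoneOn c (Iic k)) :
    ⋃ j ∈ Finset.range k, Ico (c j) (c (j + 1)) = Ico (c 0) (c k) := by
  induction k with
  | zero => simp
  | succ k ih =>
    have hk : MonotoneOn c (Iic k) := hc.mono (Iic_subset_Iic.2 k.le_succ)
    rw [Finset.range_add_one, Finset.set_biUnion_insert, ih hk, union_comm,
      Ico_union_Ico_eq_Ico (hk (Nat.zero_le k) self_mem_Iic (Nat.zero_le k))
        (hc (mem_Iic.2 k.le_succ) self_mem_Iic k.le_succ)]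

lemma biUnion_range_succ_eq_Icc {α : Type*} [LinearOrder α] {c : ℕ → α} {b : α} {k : ℕ}
    {I : ℕ → Set α} (hc : MonotoneOn c (Iic k)) (hb : c k ≤ b)
    (hI : ∀ j ≤ k, I j = if j = k then Icc (c j) b else Ico (c j) (c (j + 1))) :
    ⋃ j ∈ Finset.range (k + 1), I j = Icc (c 0) b := by
  have hIco :
      ⋃ j ∈ Finset.range k, I j = ⋃ j ∈ Finset.range k, Ico (c j) (c (j + 1)) :=
    iUnion₂_congr fun j hj => by
      rw [Finset.mem_range] at hj
      rw [hI j hj.le, if_neg hj.ne]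
  rw [Finset.range_add_one, Finset.set_biUnion_insert, hIco, biUnion_range_Ico_eq_Ico hc,
    hI k le_rfl, if_pos rfl, union_comm,
    Ico_union_Icc_eq_Icc (hc (Nat.zero_le k) self_mem_Iic (Nat.zero_le k)) hb]

section Algorithm

variable {n : ℕ} {x : Fin n → ℕ → ℝ} {σ : ℕ → Fin n} {c : ℕ → ℝ}

lemma cut_le_cutPoint (hx0 : ∀ i, x i 0 = 0)
    (hmin : ∀ j k, j ≤ k → k < n → x (σ j) (j + 1) ≤ x (σ k) (j + 1))
    (hc0 : c 0 = 0) (hc : ∀ j, 1 ≤ j → j ≤ n - 1 → c j = x (σ (j - 1)) j)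
    {j : ℕ} (hj : j < n) : c j ≤ x (σ j) j := by
  rcases j with _ | j
  · rw [hc0, hx0]
  · rw [hc (j + 1) (by omega) (by omega), Nat.add_sub_cancel]
    exact hmin j (j + 1) j.le_succ hj

lemma monotoneOn_cut (hx0 : ∀ i, x i 0 = 0) (hxmono : ∀ i, ∀ j < n, x i j < x i (j + 1))
    (hmin : ∀ j k, j ≤ k → k < n → x (σ j) (j + 1) ≤ x (σ k) (j + 1))
    (hc0 : c 0 = 0) (hc : ∀ j, 1 ≤ j → j ≤ n - 1 → c j = x (σ (j - 1)) j) :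
    MonotoneOn c (Iic (n - 1)) :=
  monotoneOn_of_le_add_one ordConnected_Iic fun j _ _ hj => by
    have hj : j + 1 ≤ n - 1 := hj
    rw [hc (j + 1) (by omega) hj, Nat.add_sub_cancel]
    exact (cut_le_cutPoint hx0 hmin hc0 hc (by omega)).trans (hxmono _ j (by omega)).le

end Algorithm

theorem algorithm_three_proportional_entire
    (n : ℕ) (hn : 2 ≤ n)
    (f : Fin n → ℝ → ℝ)
    (hpwc : ∀ i, PWC (f i))
    (hpos : ∀ i, ∀ t ∈ Set.Icc (0:ℝ) 1, 0 < f i t)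
    -- per-agent proportional cut points
    (x : Fin n → ℕ → ℝ)
    (hx0 : ∀ i, x i 0 = 0) (hxn : ∀ i, x i n = 1)
    (hxmono : ∀ i, ∀ j < n, x i j < x i (j + 1))
    (hxeq : ∀ i, ∀ j < n,
      (∫ t in x i j..x i (j + 1), f i t) = (1 / n) * ∫ t in (0:ℝ)..1, f i t)
    -- σ enumerates the agents in allocation order; in round j the chosen agent minimizes
    -- x · (j+1) among agents not yet allocated
    (σ : ℕ → Fin n)
    (hmin : ∀ j k, j ≤ k → k < n → x (σ j) (j + 1) ≤ x (σ k) (j + 1))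
    (c : ℕ → ℝ) (hc0 : c 0 = 0)
    (hc : ∀ j, 1 ≤ j → j ≤ n - 1 → c j = x (σ (j - 1)) j)
    (A : ℕ → Set ℝ)
    (hA : ∀ j < n, A j = if j = n - 1 then Set.Icc (c j) 1 else Set.Ico (c j) (c (j + 1))) :
    (∀ j < n, val (f (σ j)) (A j) ≥ (1 / n) * val (f (σ j)) (Set.Icc 0 1)) ∧
    (⋃ j ∈ Finset.range n, A j) = Set.Icc (0:ℝ) 1 := by
  have hx01 : ∀ i, ∀ j ≤ n, x i j ∈ Icc (0:ℝ) 1 := fun i j hj =>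
    have hmono := monotoneOn_Iic_of_lt_add_one (hxmono i)
    ⟨hx0 i ▸ hmono (Nat.zero_le n) hj (Nat.zero_le j), hxn i ▸ hmono hj self_mem_Iic hj⟩
  have hcmono := monotoneOn_cut hx0 hxmono hmin hc0 hc
  have hc1 : c (n - 1) ≤ 1 := by
    rw [hc (n - 1) (by omega) le_rfl]
    exact (hx01 _ _ (by omega)).2
  refine ⟨fun j hj => ?_, ?_⟩
  · have hstart : c j ≤ x (σ j) j := cut_le_cutPoint hx0 hmin hc0 hc hj
    have hstep : x (σ j) j ≤ x (σ j) (j + 1) := (hxmono _ j hj).le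
    have hval : val (f (σ j)) (A j) = ∫ t in c j..x (σ j) (j + 1), f (σ j) t := by
      rw [hA j hj]
      split_ifs with hlast
      · rw [hlast, Nat.sub_add_cancel (by omega), hxn, val_Icc _ hc1]
      · rw [hc (j + 1) (by omega) (by omega), Nat.add_sub_cancel, val_Ico _ (hstart.trans hstep)]
    have hc0j : 0 ≤ c j := hc0 ▸ hcmono (Nat.zero_le _) (mem_Iic.2 (by omega)) (Nat.zero_le j)
    rw [hval, val_Icc _ zero_le_one, ← hxeq _ j hj]
    exact integral_le_integral_of_subinterval
      ((hpwc _).integrableOn.mono_set (Icc_subset_Icc hc0j (hx01 _ _ hj).2))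
      (fun t ht => (hpos _ t ⟨hc0j.trans ht.1, ht.2.trans (hx01 _ _ hj).2⟩).le)
      hstart hstep le_rfl
  · have hcover := biUnion_range_succ_eq_Icc hcmono hc1 fun j hj => hA j (by omega)
    rwa [Nat.sub_add_cancel (by omega), hc0] at hcover
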